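/- (Reversed radial Alexandrov–Bol inequality.) Let α ∈ [0,1), R > 0, and let g : [R,∞) → ℝ satisfy the exterior radial Bol hypothesis with parameter α, with exterior mass function m(r) = 2π∫_r^∞ s^{1−2α} e^{g(s)} ds. Assume m(R) < 8π(1−α). Then ( 2π R^{1−α} e^{g(R)/2} )² ≤ (1/2) · m(R) · ( 8π(1−α) − m(R) ). -/

import Mathlib

open Real MeasureTheory Metric Filter Topology RealInnerProductSpace

noncomputable section

/-- The plane `ℝ²`. -/
abbrev Pl := EuclideanSpace ℝ (Fin 2)

/-- The Laplacian `Δu = ∂²u/∂x₁² + ∂²u/∂x₂²` of a function on `ℝ²`. -/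
def lap (u : Pl → ℝ) (x : Pl) : ℝ :=
  ∑ i : Fin 2, fderiv ℝ (fun y => fderiv ℝ u y (EuclideanSpace.single i 1)) x
    (EuclideanSpace.single i 1)

/-- `g` satisfies the exterior radial Bol hypothesis with parameter `a` on `[R,∞)`:
it is continuous and strictly decreasing on `[R,∞)`, differentiable on `(R,∞)`, the
exterior mass `m(r) = 2π∫_r^∞ s^{1−2a} e^{g(s)} ds` is finite for every `r ≥ R`, and
`2πr·(−g'(r)) ≤ 8π(1−a) − m(r)` for every `r ∈ (R,∞)`. -/
def ExteriorBol (a R : ℝ) (g : ℝ → ℝ) : Prop :=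
  ContinuousOn g (Set.Ici R) ∧ StrictAntiOn g (Set.Ici R) ∧
  (∀ r ∈ Set.Ioi R, DifferentiableAt ℝ g r) ∧
  (∀ r ∈ Set.Ici R, IntegrableOn (fun s => s ^ (1 - 2*a) * Real.exp (g s)) (Set.Ioi r)) ∧
  (∀ r ∈ Set.Ioi R,
    2 * π * r * (-(deriv g r)) ≤
      8 * π * (1 - a) - 2 * π * ∫ s in Set.Ioi r, s ^ (1 - 2*a) * Real.exp (g s))

/-!
The gap `F(r) = ½ m(r) (8π(1-a) - m(r)) - 4π² r^{2-2a} e^{g(r)}` has derivative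
`-2π r^{1-2a} e^{g(r)} · (8π(1-a) - m(r) - 2πr(-g'(r)))`, which the Bol hypothesis makes
nonpositive, so `F` is antitone on `[R, ∞)`. At infinity `m(r) → 0`, and the boundary term
`4π² r · r^{1-2a} e^{g(r)}` cannot stay above a positive constant, because `r^{1-2a} e^{g(r)}`
is integrable while `1/r` is not. Hence `F(R) ≥ limsup F ≥ 0`, which is the claim since
`(2π R^{1-a} e^{g(R)/2})² = 4π² R^{2-2a} e^{g(R)}`.
-/

open Set

theorem hasDerivAt_integral_Ioi {E : Type*} [NormedAddCommGroup E] [NormedSpace ℝ E]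
    [CompleteSpace E] {f : ℝ → E} {R r : ℝ} (hf : IntegrableOn f (Ioi R))
    (hr : R < r) (hmeas : StronglyMeasurableAtFilter f (𝓝 r)) (hfr : ContinuousAt f r) :
    HasDerivAt (fun u => ∫ s in Ioi u, f s) (-f r) r := by
  have hprim : HasDerivAt (fun u => ∫ s in R..u, f s) (f r) r :=
    intervalIntegral.integral_hasDerivAt_right
      ((intervalIntegrable_iff_integrableOn_Ioc_of_le hr.le).2
        (hf.mono_set Ioc_subset_Ioi_self)) hmeas hfr
  refine (hprim.const_sub (∫ s in Ioi R, f s)).congr_of_eventuallyEq ?_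
  filter_upwards [Ioi_mem_nhds hr] with u hu
  rw [← intervalIntegral.integral_Ioi_sub_Ioi hf (le_of_lt hu), sub_sub_cancel]

theorem frequently_mul_lt_of_integrableOn_Ioi {f : ℝ → ℝ} {R c : ℝ}
    (hf : IntegrableOn f (Ioi R)) (hc : 0 < c) : ∃ᶠ r in atTop, r * f r < c := by
  intro hge
  obtain ⟨r₀, hr₀⟩ := eventually_atTop.1 hge
  set r₁ := max r₀ (max R 0)
  refine not_integrableOn_Ioi_inv (a := r₁) (Integrable.mono'
    ((hf.mono_set (Ioi_subset_Ioi (le_max_of_le_right (le_max_left R 0)))).div_const c)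
    measurable_inv.aestronglyMeasurable ((ae_restrict_iff' measurableSet_Ioi).2
      (Eventually.of_forall fun x hx => ?_)))
  have hx : r₀ < x ∧ R < x ∧ 0 < x := by
    simp only [mem_Ioi, r₁, max_lt_iff] at hx
    exact ⟨hx.1, hx.2⟩
  rw [Real.norm_of_nonneg (inv_nonneg.2 hx.2.2.le), le_div_iff₀ hc, inv_mul_le_iff₀ hx.2.2]
  exact not_lt.1 (hr₀ x hx.1.le)

theorem sq_two_pi_rpow_mul_exp_half {r : ℝ} (hr : 0 < r) (a x : ℝ) :
    (2 * π * r ^ (1 - a) * Real.exp (x / 2)) ^ 2 = 4 * π ^ 2 * (r ^ (2 - 2 * a) * Real.exp x) := by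
  have hpow : r ^ (1 - a) * r ^ (1 - a) = r ^ (2 - 2 * a) := by
    rw [← Real.rpow_add hr]
    ring_nf
  have hexp : Real.exp (x / 2) * Real.exp (x / 2) = Real.exp x := by
    rw [← Real.exp_add, add_halves]
  rw [← hpow, ← hexp]
  ring

theorem rpow_two_sub_two_mul {r : ℝ} (hr : 0 < r) (a : ℝ) :
    r ^ (2 - 2 * a) = r * r ^ (1 - 2 * a) := by
  rw [show 2 - 2 * a = 1 + (1 - 2 * a) by ring, Real.rpow_add hr, Real.rpow_one]

def exteriorMass (a : ℝ) (g : ℝ → ℝ) (r : ℝ) : ℝ :=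
  2 * π * ∫ s in Ioi r, s ^ (1 - 2*a) * Real.exp (g s)

def bolGap (a : ℝ) (g : ℝ → ℝ) (r : ℝ) : ℝ :=
  1 / 2 * exteriorMass a g r * (8 * π * (1 - a) - exteriorMass a g r) -
    4 * π ^ 2 * (r ^ (2 - 2 * a) * Real.exp (g r))

theorem tendsto_exteriorMass_atTop (a : ℝ) (g : ℝ → ℝ) :
    Tendsto (exteriorMass a g) atTop (𝓝 0) := by
  rw [← mul_zero (2 * π)]
  exact (tendsto_integral_Ioi_zero (f := fun s => s ^ (1 - 2*a) * Real.exp (g s))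
    (μ := volume) tendsto_id).const_mul (2 * π)

namespace ExteriorBol

variable {a R : ℝ} {g : ℝ → ℝ}

theorem continuousOn_rpow_mul_exp (hg : ExteriorBol a R g) (hR : 0 < R) (p : ℝ) :
    ContinuousOn (fun s => s ^ p * Real.exp (g s)) (Ici R) :=
  (continuousOn_id.rpow_const fun _ hs => Or.inl (hR.trans_le hs).ne').mul
    (Real.continuous_exp.comp_continuousOn hg.1)

theorem continuousOn_exteriorMass (hg : ExteriorBol a R g) :
    ContinuousOn (exteriorMass a g) (Ici R) :=
  continuousOn_const.mul (hg.2.2.2.1 R self_mem_Ici).continuousOn_Ici_primitive_Ioi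

theorem hasDerivAt_exteriorMass (hg : ExteriorBol a R g) (hR : 0 < R) {r : ℝ} (hr : R < r) :
    HasDerivAt (exteriorMass a g) (-(2 * π * (r ^ (1 - 2*a) * Real.exp (g r)))) r := by
  have hcont := (hg.continuousOn_rpow_mul_exp hR (1 - 2*a)).mono (Ioi_subset_Ici_self (a := R))
  have h := hasDerivAt_integral_Ioi (hg.2.2.2.1 R self_mem_Ici) hr
    (hcont.stronglyMeasurableAtFilter isOpen_Ioi r hr) (hcont.continuousAt (Ioi_mem_nhds hr))
  exact (h.const_mul (2 * π)).congr_deriv (mul_neg _ _)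

theorem hasDerivAt_bolGap (hg : ExteriorBol a R g) (hR : 0 < R) {r : ℝ} (hr : R < r) :
    HasDerivAt (bolGap a g)
      (-(2 * π * (r ^ (1 - 2*a) * Real.exp (g r))) *
        (8 * π * (1 - a) - exteriorMass a g r - 2 * π * r * (-deriv g r))) r := by
  have hr0 : 0 < r := hR.trans hr
  have hm := hg.hasDerivAt_exteriorMass hR hr
  have hB := ((Real.hasDerivAt_rpow_const (p := 2 - 2 * a) (Or.inl hr0.ne')).mul
    (hg.2.2.1 r hr).hasDerivAt.exp).const_mul (4 * π ^ 2)
  refine (((hm.const_mul (1 / 2)).mul (hm.const_sub (8 * π * (1 - a)))).sub hB).congr_deriv ?_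
  rw [show 2 - 2 * a - 1 = 1 - 2 * a by ring, rpow_two_sub_two_mul hr0]
  ring

theorem continuousOn_bolGap (hg : ExteriorBol a R g) (hR : 0 < R) :
    ContinuousOn (bolGap a g) (Ici R) := by
  have hm := hg.continuousOn_exteriorMass
  have hB := hg.continuousOn_rpow_mul_exp hR (2 - 2 * a)
  unfold bolGap
  fun_prop

theorem antitoneOn_bolGap (hg : ExteriorBol a R g) (hR : 0 < R) :
    AntitoneOn (bolGap a g) (Ici R) := by
  refine antitoneOn_of_deriv_nonpos (convex_Ici R) (hg.continuousOn_bolGap hR)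
    (fun r hr => ?_) (fun r hr => ?_) <;> rw [interior_Ici] at hr
  · exact (hg.hasDerivAt_bolGap hR hr).differentiableAt.differentiableWithinAt
  · have hbol := hg.2.2.2.2 r hr
    have hdens : 0 ≤ 2 * π * (r ^ (1 - 2*a) * Real.exp (g r)) := by
      have := (hR.trans hr).le
      positivity
    rw [(hg.hasDerivAt_bolGap hR hr).deriv]
    exact mul_nonpos_of_nonpos_of_nonneg (neg_nonpos.2 hdens) (by unfold exteriorMass; linarith)

theorem bolGap_nonneg (hg : ExteriorBol a R g) (hR : 0 < R) : 0 ≤ bolGap a g R := by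
  by_contra! hneg
  set δ := -bolGap a g R
  have hmass : Tendsto (fun r => 1 / 2 * exteriorMass a g r * (8 * π * (1 - a) - exteriorMass a g r))
      atTop (𝓝 0) := by
    have h := ((tendsto_exteriorMass_atTop a g).const_mul (1 / 2)).mul
      ((tendsto_exteriorMass_atTop a g).const_sub (8 * π * (1 - a)))
    rwa [mul_zero, zero_mul] at h
  have hlarge : ∀ᶠ r in atTop, δ / 2 ≤ r * (4 * π ^ 2 * (r ^ (1 - 2*a) * Real.exp (g r))) := by
    filter_upwards [hmass.eventually (lt_mem_nhds (show -δ / 2 < 0 by linarith)),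
      eventually_ge_atTop R] with r hsmall hRr
    have hanti := hg.antitoneOn_bolGap hR self_mem_Ici hRr hRr
    rw [bolGap, rpow_two_sub_two_mul (hR.trans_le hRr)] at hanti
    linarith
  have hsmall := frequently_mul_lt_of_integrableOn_Ioi
    ((hg.2.2.2.1 R self_mem_Ici).const_mul (4 * π ^ 2)) (show 0 < δ / 2 by linarith)
  obtain ⟨r, hlt, hge⟩ := (hsmall.and_eventually hlarge).exists
  exact hlt.not_ge hge

end ExteriorBol

theorem radial_singular_bol_reversed_general (a R : ℝ) (hR : 0 < R)
    (g : ℝ → ℝ) (hg : ExteriorBol a R g) :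
    (2 * π * R ^ (1-a) * Real.exp (g R / 2)) ^ 2 ≤
      (1/2) * (2 * π * ∫ s in Set.Ioi R, s ^ (1 - 2*a) * Real.exp (g s)) *
        (8 * π * (1 - a) - 2 * π * ∫ s in Set.Ioi R, s ^ (1 - 2*a) * Real.exp (g s)) := by
  have h := hg.bolGap_nonneg hR
  rw [bolGap, ← sq_two_pi_rpow_mul_exp_half hR] at h
  unfold exteriorMass at h
  linarith

/-- Reversed radial Alexandrov–Bol inequality. -/
theorem radial_singular_bol_reversed (a R : ℝ) (ha : a ∈ Set.Ico (0:ℝ) 1) (hR : 0 < R)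
    (g : ℝ → ℝ) (hg : ExteriorBol a R g)
    (hmR : 2 * π * ∫ s in Set.Ioi R, s ^ (1 - 2*a) * Real.exp (g s) < 8 * π * (1 - a)) :
    (2 * π * R ^ (1-a) * Real.exp (g R / 2)) ^ 2 ≤
      (1/2) * (2 * π * ∫ s in Set.Ioi R, s ^ (1 - 2*a) * Real.exp (g s)) *
        (8 * π * (1 - a) - 2 * π * ∫ s in Set.Ioi R, s ^ (1 - 2*a) * Real.exp (g s)) :=
  radial_singular_bol_reversed_general a R hR g hg
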